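/- Let q ≥ 5 be a prime power not divisible by 3. For m ∈ {1,2}, let V_m be the number of β ∈ F_q such that the cubic polynomial t³ - 3βt² - 1 has exactly m roots in F_q. Then the number of points of the line ℓ_L that lie in exactly two osculating planes of the twisted cubic equals V₂ + 1, and the number of points of ℓ_L that lie in exactly one osculating plane equals V₁. -/

import Mathlib

/-!
Since `q` is a power of a prime other than `3`, we have `3 ≠ 0` in `F`, so distinct parameters
give distinct osculating planes, and the osculating planes through the point `⟨v⟩` correspond to
the parameters `τ` with `v ∈ π_osc(τ)`. The vector `Q_∞ = (0,0,1,0)` lies in `π_osc(∞)` and in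
`π_osc(t)` iff `3t² = 0`: two planes. The vector `Q_β` lies in no `π_osc(∞)`, and in `π_osc(t)`
iff `1 + 3βt² - t³ = 0`, i.e. iff `t` is a root of `t³ - 3βt² - 1`.
-/
/-- The osculating plane `π_osc(t)` of the twisted cubic, as a subset of `F_q⁴`:
for `t ∈ F_q` it is `{x | x₀ - 3t·x₁ + 3t²·x₂ - t³·x₃ = 0}`, and
`π_osc(∞)` is `{x | x₃ = 0}`. -/
def oscSet {F : Type*} [Field F] : Option F → Set (Fin 4 → F)
  | none => {x | x 3 = 0}
  | some t => {x | x 0 - 3 * t * x 1 + 3 * t ^ 2 * x 2 - t ^ 3 * x 3 = 0}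

/-- The spanning vectors of the points of the line `ℓ_L`: `Q_∞ = (0,0,1,0)` and
`Q_β = (1,0,β,1)` for `β ∈ F_q`. -/
def QL {F : Type*} [Field F] : Option F → (Fin 4 → F)
  | none => ![0, 0, 1, 0]
  | some b => ![1, 0, b, 1]

theorem FiniteField.three_ne_zero_of_not_dvd_card {F : Type*} [Field F] [Fintype F]
    (h3 : ¬ 3 ∣ Fintype.card F) : (3 : F) ≠ 0 := by
  intro h
  have hchar3 : ringChar F ∣ 3 := (CharP.cast_eq_zero_iff F (ringChar F) 3).mp h
  have hcharq : ringChar F ∣ Fintype.card F :=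
    (CharP.cast_eq_zero_iff F (ringChar F) _).mp (FiniteField.cast_card_eq_zero F)
  have hcop : Nat.Coprime 3 (Fintype.card F) := Nat.prime_three.coprime_iff_not_dvd.mpr h3
  exact CharP.ringChar_ne_one ((hcop.coprime_dvd_left hchar3).eq_one_of_dvd hcharq)

theorem Set.ncard_option {α : Type*} [Finite α] (s : Set (Option α)) [Decidable (none ∈ s)] :
    s.ncard = (some ⁻¹' s).ncard + if none ∈ s then 1 else 0 := by
  have himage : s \ {none} = some '' (some ⁻¹' s) := by
    ext (_ | a) <;> simp
  rw [← Set.ncard_image_of_injective _ (Option.some_injective α), ← himage]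
  split_ifs with h
  · rw [Set.ncard_sdiff_singleton_add_one h]
  · rw [Set.sdiff_singleton_eq_self h, add_zero]

section OsculatingPlanes

variable {F : Type*} [Field F]

theorem smul_mem_oscSet (τ : Option F) (c : F) {v : Fin 4 → F} (hv : v ∈ oscSet τ) :
    c • v ∈ oscSet τ := by
  cases τ <;> simp only [oscSet, Set.mem_ofPred_eq, Pi.smul_apply, smul_eq_mul] at *
  · rw [hv, mul_zero]
  · linear_combination c * hv

theorem span_singleton_subset_oscSet_iff (v : Fin 4 → F) (τ : Option F) :
    (Submodule.span F {v} : Set (Fin 4 → F)) ⊆ oscSet τ ↔ v ∈ oscSet τ := by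
  refine ⟨fun h => h (Submodule.mem_span_singleton_self v), fun h x hx => ?_⟩
  obtain ⟨c, rfl⟩ := Submodule.mem_span_singleton.mp hx
  exact smul_mem_oscSet τ c h

theorem oscSet_injective (h3 : (3 : F) ≠ 0) : Function.Injective (oscSet (F := F)) := by
  intro τ σ h
  match τ, σ with
  | none, none => rfl
  | none, some s =>
    have hs : (![s ^ 3, 0, 0, 1] : Fin 4 → F) ∈ oscSet (some s) := by simp [oscSet]
    rw [← h] at hs
    simp [oscSet] at hs
  | some t, none =>
    have ht : (![t ^ 3, 0, 0, 1] : Fin 4 → F) ∈ oscSet (some t) := by simp [oscSet]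
    rw [h] at ht
    simp [oscSet] at ht
  | some t, some s =>
    have ht : (![3 * t, 1, 0, 0] : Fin 4 → F) ∈ oscSet (some t) := by simp [oscSet]
    rw [h] at ht
    have hts : (3 : F) * (t - s) = 0 := by
      simp only [oscSet, Set.mem_ofPred_eq, Matrix.cons_val_zero, Matrix.cons_val_one,
        Matrix.cons_val, mul_one, mul_zero, add_zero, sub_zero] at ht
      linear_combination ht
    rw [mul_eq_zero, sub_eq_zero] at hts
    exact congrArg some (hts.resolve_left h3)

theorem ncard_oscSet_supset_span_singleton (h3 : (3 : F) ≠ 0) (v : Fin 4 → F) :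
    {π | (∃ τ, π = oscSet τ) ∧ (Submodule.span F {v} : Set (Fin 4 → F)) ⊆ π}.ncard =
      {τ | v ∈ oscSet τ}.ncard := by
  rw [← Set.ncard_image_of_injective _ (oscSet_injective h3)]
  congr 1
  ext π
  constructor
  · rintro ⟨⟨τ, rfl⟩, hv⟩
    exact ⟨τ, (span_singleton_subset_oscSet_iff v τ).mp hv, rfl⟩
  · rintro ⟨τ, hv, rfl⟩
    exact ⟨⟨τ, rfl⟩, (span_singleton_subset_oscSet_iff v τ).mpr hv⟩

theorem QL_none_mem_oscSet_iff (h3 : (3 : F) ≠ 0) (τ : Option F) :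
    QL none ∈ oscSet τ ↔ τ = none ∨ τ = some 0 := by
  cases τ with
  | none => simp [oscSet, QL]
  | some t => simp [oscSet, QL, h3]

theorem QL_some_mem_oscSet_iff (b : F) (τ : Option F) :
    QL (some b) ∈ oscSet τ ↔ ∃ t, τ = some t ∧ t ^ 3 - 3 * b * t ^ 2 - 1 = 0 := by
  cases τ with
  | none => simp [oscSet, QL]
  | some t =>
    simp only [oscSet, QL, Set.mem_ofPred_eq, Matrix.cons_val_zero, Matrix.cons_val_one,
      Matrix.cons_val, mul_zero, sub_zero, mul_one, Option.some.injEq, exists_eq_left']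
    constructor <;> intro h <;> linear_combination -h

theorem span_QL_injective :
    Function.Injective (fun β : Option F => Submodule.span F {QL β}) := by
  intro β γ (h : Submodule.span F {QL β} = Submodule.span F {QL γ})
  obtain ⟨c, hc⟩ := Submodule.mem_span_singleton.mp
    (h ▸ Submodule.mem_span_singleton_self (QL β))
  have h0 := congrFun hc 0
  have h2 := congrFun hc 2
  match β, γ with
  | none, none => rfl
  | none, some b =>
    simp only [QL, Pi.smul_apply, Matrix.cons_val_zero, Matrix.cons_val, smul_eq_mul,
      mul_one] at h0 h2
    simp [h0] at h2
  | some b, none => simp [QL] at h0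
  | some b, some b' =>
    simp only [QL, Pi.smul_apply, Matrix.cons_val_zero, Matrix.cons_val, smul_eq_mul,
      mul_one] at h0 h2
    rw [← h2, h0, one_mul]

theorem ncard_oscSet_supset_span_QL_none (h3 : (3 : F) ≠ 0) :
    {π | (∃ τ, π = oscSet τ) ∧
      (Submodule.span F {QL (none : Option F)} : Set (Fin 4 → F)) ⊆ π}.ncard = 2 := by
  have hτ : {τ | QL (none : Option F) ∈ oscSet τ} = {none, some 0} :=
    Set.ext (QL_none_mem_oscSet_iff h3)
  rw [ncard_oscSet_supset_span_singleton h3, hτ]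
  exact Set.ncard_pair (Option.some_ne_none 0).symm

theorem ncard_oscSet_supset_span_QL_some (h3 : (3 : F) ≠ 0) (b : F) :
    {π | (∃ τ, π = oscSet τ) ∧ (Submodule.span F {QL (some b)} : Set (Fin 4 → F)) ⊆ π}.ncard =
      {t : F | t ^ 3 - 3 * b * t ^ 2 - 1 = 0}.ncard := by
  rw [ncard_oscSet_supset_span_singleton h3,
    ← Set.ncard_image_of_injective _ (Option.some_injective F)]
  congr 1
  ext τ
  simp only [Set.mem_ofPred_eq, Set.mem_image, QL_some_mem_oscSet_iff]
  exact exists_congr fun t => and_comm.trans (and_congr_right' eq_comm)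

end OsculatingPlanes

theorem stmt7 (q : ℕ) (h3 : ¬ (3 ∣ q))
    (F : Type*) [Field F] [Fintype F] (hcard : Fintype.card F = q) :
    let linePts : Set (Submodule F (Fin 4 → F)) :=
      {p | ∃ β : Option F, p = Submodule.span F {QL β}}
    let numOsc : Submodule F (Fin 4 → F) → ℕ := fun p =>
      Set.ncard {π : Set (Fin 4 → F) | (∃ τ : Option F, π = oscSet τ) ∧ (p : Set (Fin 4 → F)) ⊆ π}
    let V : ℕ → ℕ := fun m =>
      Set.ncard {β : F | ({t : F | t ^ 3 - 3 * β * t ^ 2 - 1 = 0} : Set F).ncard = m}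
    Set.ncard {p ∈ linePts | numOsc p = 2} = V 2 + 1 ∧
    Set.ncard {p ∈ linePts | numOsc p = 1} = V 1 := by
  intro linePts numOsc V
  have h3F : (3 : F) ≠ 0 := FiniteField.three_ne_zero_of_not_dvd_card (hcard ▸ h3)
  have hnone : numOsc (Submodule.span F {QL none}) = 2 := ncard_oscSet_supset_span_QL_none h3F
  have hsome (b : F) : numOsc (Submodule.span F {QL (some b)}) =
      {t : F | t ^ 3 - 3 * b * t ^ 2 - 1 = 0}.ncard := ncard_oscSet_supset_span_QL_some h3F b
  have hlevel (m : ℕ) : {p ∈ linePts | numOsc p = m}.ncard =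
      {b : F | numOsc (Submodule.span F {QL (some b)}) = m}.ncard +
        if numOsc (Submodule.span F {QL none}) = m then 1 else 0 := by
    have himage : {p ∈ linePts | numOsc p = m} =
        (fun β => Submodule.span F {QL β}) '' {β | numOsc (Submodule.span F {QL β}) = m} := by
      ext p
      constructor
      · rintro ⟨⟨β, rfl⟩, hm⟩
        exact ⟨β, hm, rfl⟩
      · rintro ⟨β, hm, rfl⟩
        exact ⟨⟨β, rfl⟩, hm⟩
    rw [himage, Set.ncard_image_of_injective _ span_QL_injective, Set.ncard_option]
    rfl
  simp only [hlevel, hnone, hsome]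
  exact ⟨rfl, rfl⟩
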